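/- Let G be a connected VT⁺ graph on a finite set A, let B be a finite set with |A| ≤ |B|, let ε > 0, and let M be a channel matrix from A to B satisfying ε-differential privacy with respect to G. Fix any vertex r ∈ A and, for each d from 0 to the diameter of G, let n_d be the number of vertices of G at graph distance d from r. Then H∞(A|B) ≥ log₂(Σ_d n_d · e^{−ε·d}); equivalently, Σ_{b∈B} max_{a∈A} M(a,b) ≤ |A| / Σ_d n_d · e^{−ε·d}. -/
import Mathlib

open Finset

/-- The diameter of a graph on a finite vertex set. -/
noncomputable def graphDiam {A : Type*} [Fintype A] (G : SimpleGraph A) : ℕ :=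
  Finset.univ.sup fun p : A × A => G.dist p.1 p.2

/-- The number of vertices at graph distance `d` from `r`. -/
noncomputable def nAtDist {A : Type*} [Fintype A] (G : SimpleGraph A) (r : A) (d : ℕ) : ℕ :=
  (Finset.univ.filter fun a => G.dist r a = d).card

/-- `∑ d from 0 to diam, n_d · e^{-ε d}`. -/
noncomputable def expDistSum {A : Type*} [Fintype A] (G : SimpleGraph A) (ε : ℝ) (r : A) : ℝ :=
  ∑ d ∈ Finset.range (graphDiam G + 1), (nAtDist G r d : ℝ) * Real.exp (-(ε * d))

/-- `ε`-differential privacy of a channel matrix with respect to a graph. -/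
def SatisfiesDP {A B : Type*} (G : SimpleGraph A) (ε : ℝ) (M : A → B → ℝ) : Prop :=
  ∀ (b : B) (a a' : A), G.Adj a a' → M a b ≤ Real.exp ε * M a' b

/-- A graph on a finite vertex set `A` with `|A| = n` is VT⁺ if there are `n`
automorphisms `σ_0, …, σ_{n-1}` such that for every vertex `a`,
`{σ_0(a), …, σ_{n-1}(a)} = A`. -/
def IsVTPlus {A : Type*} [Fintype A] (G : SimpleGraph A) : Prop :=
  ∃ σ : Fin (Fintype.card A) → (G ≃g G), ∀ a a' : A, ∃ i, σ i a = a'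

lemma iso_dist_eq {A : Type*} (G : SimpleGraph A) (hconn : G.Connected) (φ : G ≃g G)
    (a a' : A) : G.dist (φ a) (φ a') = G.dist a a' := by
  have key : ∀ (ψ : G ≃g G) (x y : A), G.dist (ψ x) (ψ y) ≤ G.dist x y := by
    intro ψ x y
    obtain ⟨p, hp⟩ := hconn.exists_walk_length_eq_dist x y
    have := G.dist_le (p.map ψ.toHom)
    rwa [SimpleGraph.Walk.length_map, hp] at this
  refine le_antisymm (key φ a a') ?_
  have := key φ.symm (φ a) (φ a')
  simpa using this

lemma dp_walk {A B : Type*} (G : SimpleGraph A) {ε : ℝ}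
    {M : A → B → ℝ} (hdp : SatisfiesDP G ε M)
    (b : B) : ∀ {a a' : A} (p : G.Walk a a'),
      M a b ≤ Real.exp (ε * p.length) * M a' b := by
  intro a a' p
  induction p with
  | nil => simp
  | @cons u v w h q ih =>
    calc M u b ≤ Real.exp ε * M v b := hdp b u v h
    _ ≤ Real.exp ε * (Real.exp (ε * q.length) * M w b) := by
        have := Real.exp_nonneg ε
        nlinarith [ih]
    _ = Real.exp (ε * (SimpleGraph.Walk.cons h q).length) * M w b := by
        rw [SimpleGraph.Walk.length_cons]
        push_cast
        rw [mul_add, mul_one, Real.exp_add]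
        ring

lemma dp_dist {A B : Type*} (G : SimpleGraph A) (hconn : G.Connected) {ε : ℝ}
    {M : A → B → ℝ} (hdp : SatisfiesDP G ε M)
    (b : B) (a a' : A) : M a b ≤ Real.exp (ε * G.dist a a') * M a' b := by
  obtain ⟨p, hp⟩ := hconn.exists_walk_length_eq_dist a a'
  have := dp_walk G hdp b p
  rwa [hp] at this

theorem stmt1 {A B : Type*} [Fintype A] [Nonempty A] [Fintype B]
    (G : SimpleGraph A)
    (hconn : G.Connected) (hVT : IsVTPlus G)
    (hcard : Fintype.card A ≤ Fintype.card B)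
    (ε : ℝ) (hε : 0 < ε)
    (M : A → B → ℝ)
    (hM0 : ∀ a b, 0 ≤ M a b)
    (hM1 : ∀ a, ∑ b, M a b = 1)
    (hdp : SatisfiesDP G ε M)
    (r : A) :
    (∑ b, Finset.univ.sup' Finset.univ_nonempty (fun a => M a b))
        ≤ (Fintype.card A : ℝ) / expDistSum G ε r ∧
    Real.logb 2 (expDistSum G ε r)
        ≤ -(Real.logb 2 ((1 / (Fintype.card A : ℝ)) *
            ∑ b, Finset.univ.sup' Finset.univ_nonempty (fun a => M a b))) := by
  set S := expDistSum G ε r with hSdef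
  -- expDistSum as a sum over vertices
  have hS_eq : ∀ x : A, S = ∑ a : A, Real.exp (-(ε * G.dist x a)) := by
    intro x
    obtain ⟨σ, hσ⟩ := hVT
    obtain ⟨i, hi⟩ := hσ r x
    have hdist : ∀ a : A, G.dist x (σ i a) = G.dist r a := by
      intro a
      rw [← hi]
      exact iso_dist_eq G hconn (σ i) r a
    have hre : (∑ a : A, Real.exp (-(ε * G.dist x a)))
        = ∑ a : A, Real.exp (-(ε * G.dist r a)) := by
      rw [← Equiv.sum_comp (σ i).toEquiv (fun a => Real.exp (-(ε * G.dist x a)))]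
      refine Finset.sum_congr rfl fun a _ => ?_
      have h : G.dist x ((σ i).toEquiv a) = G.dist r a := hdist a
      rw [h]
    rw [hre, hSdef, expDistSum]
    have hmap : ∀ a ∈ (Finset.univ : Finset A),
        G.dist r a ∈ Finset.range (graphDiam G + 1) := by
      intro a _
      simp only [Finset.mem_range]
      have : G.dist r a ≤ graphDiam G :=
        Finset.le_sup (f := fun p : A × A => G.dist p.1 p.2) (Finset.mem_univ (r, a))
      omega
    rw [← Finset.sum_fiberwise_of_maps_to hmap (fun a => Real.exp (-(ε * G.dist r a)))]
    refine Finset.sum_congr rfl fun d _ => ?_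
    have hconst : ∑ a ∈ Finset.univ.filter (fun a => G.dist r a = d),
        Real.exp (-(ε * G.dist r a))
        = ∑ _a ∈ Finset.univ.filter (fun a => G.dist r a = d),
          Real.exp (-(ε * d)) := by
      refine Finset.sum_congr rfl fun a ha => ?_
      simp only [Finset.mem_filter] at ha
      rw [ha.2]
    rw [hconst, Finset.sum_const, nsmul_eq_mul, nAtDist]
  have hS_pos : 0 < S := by
    rw [hS_eq r]
    exact Finset.sum_pos (fun a _ => Real.exp_pos _) Finset.univ_nonempty
  -- main inequality
  have hmain : (∑ b, Finset.univ.sup' Finset.univ_nonempty (fun a => M a b))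
      ≤ (Fintype.card A : ℝ) / S := by
    have hb : ∀ b : B, Finset.univ.sup' Finset.univ_nonempty (fun a => M a b)
        ≤ (∑ a : A, M a b) / S := by
      intro b
      obtain ⟨a0, -, ha0⟩ := Finset.exists_mem_eq_sup' Finset.univ_nonempty (fun a => M a b)
      rw [ha0, le_div_iff₀ hS_pos]
      calc M a0 b * S = ∑ a : A, Real.exp (-(ε * G.dist a0 a)) * M a0 b := by
            rw [hS_eq a0, Finset.mul_sum]
            exact Finset.sum_congr rfl fun a _ => mul_comm _ _
        _ ≤ ∑ a : A, M a b := by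
            refine Finset.sum_le_sum fun a _ => ?_
            have h1 := dp_dist G hconn hdp b a0 a
            have h2 : (0:ℝ) < Real.exp (-(ε * G.dist a0 a)) := Real.exp_pos _
            have h3 : Real.exp (-(ε * (G.dist a0 a : ℝ))) *
                Real.exp (ε * (G.dist a0 a : ℝ)) = 1 := by
              rw [← Real.exp_add]; simp
            have h4 := mul_le_mul_of_nonneg_left h1 h2.le
            have h5 : Real.exp (-(ε * (G.dist a0 a : ℝ))) *
                (Real.exp (ε * (G.dist a0 a : ℝ)) * M a b) = M a b := by
              rw [← mul_assoc, h3, one_mul]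
            linarith [h4, h5]
    calc (∑ b, Finset.univ.sup' Finset.univ_nonempty (fun a => M a b))
        ≤ ∑ b, (∑ a : A, M a b) / S := Finset.sum_le_sum fun b _ => hb b
      _ = (∑ a : A, ∑ b, M a b) / S := by
          rw [← Finset.sum_div, Finset.sum_comm]
      _ = (Fintype.card A : ℝ) / S := by
          simp [hM1]
  refine ⟨hmain, ?_⟩
  -- log part
  set T := (∑ b, Finset.univ.sup' Finset.univ_nonempty (fun a => M a b)) with hTdef
  have hT_pos : 0 < T := by
    obtain ⟨a0⟩ := (inferInstance : Nonempty A)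
    have : (1:ℝ) ≤ T := by
      rw [hTdef, ← hM1 a0]
      exact Finset.sum_le_sum fun b _ =>
        Finset.le_sup' (fun a => M a b) (Finset.mem_univ a0)
    linarith
  have hcardA : (0:ℝ) < Fintype.card A := by exact_mod_cast Fintype.card_pos
  have hST : S * T ≤ (Fintype.card A : ℝ) := by
    rw [le_div_iff₀ hS_pos] at hmain
    calc S * T = T * S := mul_comm _ _
      _ ≤ _ := hmain
  have h6 : ((1 / (Fintype.card A : ℝ)) * T)⁻¹ = (Fintype.card A : ℝ) / T := by
    field_simp
  have hkey : S ≤ ((1 / (Fintype.card A : ℝ)) * T)⁻¹ := by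
    rw [h6, le_div_iff₀ hT_pos]
    exact hST
  rw [← Real.logb_inv]
  exact Real.logb_le_logb_of_le (by norm_num) hS_pos hkey
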